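/- arXiv:2412.01974 — 2 statements merged into one kernel-verified Lean document; each statement's English description precedes it below -/
import Mathlib

section
/- Let φ be a substitution of constant length k. For biinfinite sequences x, y and m ≥ 1, one has φ^m(x) = φ^m(y) if and only if Θ(x) = Θ(y) for every map Θ in F_{φ,m}. -/
/-- The extension of a substitution `φ : A → A*` to finite words, by concatenation. -/
def substWord {A : Type*} (φ : A → List A) (w : List A) : List A := w.flatMap φ

/-- The extension of a substitution of constant length `k` to biinfinite sequences:
position `0` of the image is the start of `φ(x 0)`. -/
def substZ {A : Type*} [Inhabited A] (φ : A → List A) (k : ℕ) (x : ℤ → A) : ℤ → A :=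
  fun n => (φ (x (Int.fdiv n (k : ℤ)))).getD (Int.fmod n (k : ℤ)).toNat default

/-- The shift `T^c` on biinfinite sequences (`T` is the left shift). -/
def shiftZ {A : Type*} (c : ℤ) (x : ℤ → A) : ℤ → A := fun n => x (n + c)

/-- The composition `Ψ_{i_{m-1}} ∘ ⋯ ∘ Ψ_{i_0}` of the column maps of a substitution of
constant length `k`, where `Ψ_i` sends a letter `a` to the `i`-th letter of `φ(a)`. -/
def psiWord {A : Type*} [Inhabited A] (φ : A → List A) {m k : ℕ} (i : Fin m → Fin k) : A → A :=
  fun a => (List.ofFn i).foldl (fun b j => (φ b).getD (j : ℕ) default) a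

/-- The `k`-kernel of a biinfinite sequence `x`: the set of subsequences
`n ↦ x (k^m * n + j)` for `m ≥ 0` and `0 ≤ j < k^m`. -/
def kernelK {A : Type*} (k : ℕ) (x : ℤ → A) : Set (ℤ → A) :=
  {y | ∃ (m j : ℕ), j < k ^ m ∧ y = fun n => x ((k : ℤ) ^ m * n + (j : ℤ))}

/-!
Writing every integer as `k * q + r` with `0 ≤ r < k`, the letter of `φ(x)` at `k * q + r`
is `Ψ_r (x q)`. Hence `φ(x) = φ(y)` iff `Ψ_r ∘ x = Ψ_r ∘ y` for every column `r`, and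
induction on `m`, peeling off the innermost map `Ψ_{i_0}`, gives the claim for `φ^m`.
-/

section ColumnMaps

variable {A : Type*} [Inhabited A] (φ : A → List A)

lemma psiWord_zero {k : ℕ} (i : Fin 0 → Fin k) (a : A) : psiWord φ i a = a := by
  simp [psiWord]

lemma psiWord_cons {m k : ℕ} (r : Fin k) (i : Fin m → Fin k) (a : A) :
    psiWord φ (Fin.cons r i) a = psiWord φ i ((φ a).getD r default) := by
  simp [psiWord, List.ofFn_succ]

variable {k : ℕ} (hk : 0 < k)
include hk

lemma exists_eq_mul_add_fin (n : ℤ) : ∃ (q : ℤ) (r : Fin k), n = k * q + (r : ℕ) := by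
  have hk' : (0 : ℤ) < k := by exact_mod_cast hk
  have hmod_nonneg := Int.emod_nonneg n hk'.ne'
  have hmod_lt := Int.emod_lt_of_pos n hk'
  refine ⟨n / k, ⟨(n % k).toNat, by omega⟩, ?_⟩
  rw [Int.toNat_of_nonneg hmod_nonneg, Int.mul_ediv_add_emod]

lemma substZ_mul_add (x : ℤ → A) (q : ℤ) (r : Fin k) :
    substZ φ k x (k * q + (r : ℕ)) = (φ (x q)).getD r default := by
  have hk' : (0 : ℤ) < k := by exact_mod_cast hk
  have hr : (0 : ℤ) ≤ (r : ℕ) ∧ ((r : ℕ) : ℤ) < k := ⟨by positivity, by exact_mod_cast r.isLt⟩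
  have hdiv : Int.fdiv (k * q + (r : ℕ)) k = q := by
    rw [Int.fdiv_eq_ediv_of_nonneg _ hk'.le, add_comm, Int.add_mul_ediv_left _ _ hk'.ne',
      Int.ediv_eq_zero_of_lt hr.1 hr.2, zero_add]
  have hmod : Int.fmod (k * q + (r : ℕ)) k = (r : ℕ) := by
    rw [Int.fmod_eq_emod_of_nonneg _ hk'.le, add_comm, Int.add_mul_emod_self_left,
      Int.emod_eq_of_lt hr.1 hr.2]
  rw [substZ, hdiv, hmod, Int.toNat_natCast]

lemma forall_substZ_iff (P : A → A → Prop) (x y : ℤ → A) :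
    (∀ n, P (substZ φ k x n) (substZ φ k y n)) ↔
      ∀ (r : Fin k) (q : ℤ), P ((φ (x q)).getD r default) ((φ (y q)).getD r default) := by
  constructor
  · intro h r q
    simpa only [substZ_mul_add φ hk] using h (k * q + (r : ℕ))
  · intro h n
    obtain ⟨q, r, rfl⟩ := exists_eq_mul_add_fin hk n
    simpa only [substZ_mul_add φ hk] using h r q

end ColumnMaps

theorem subst_pow_eq_iff_psi_eq_general {A : Type*} [Inhabited A] (φ : A → List A) (k : ℕ)
    (hk : 0 < k) (x y : ℤ → A) (m : ℕ) :
    (substZ φ k)^[m] x = (substZ φ k)^[m] y ↔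
      ∀ i : Fin m → Fin k, (fun n => psiWord φ i (x n)) = fun n => psiWord φ i (y n) := by
  simp only [funext_iff]
  induction m generalizing x y with
  | zero => simp only [Function.iterate_zero, id, psiWord_zero, Unique.forall_iff]
  | succ m ih =>
    rw [Function.iterate_succ_apply, Function.iterate_succ_apply, ih, Fin.forall_fin_succ_pi]
    simp only [psiWord_cons]
    exact (forall_congr' fun i =>
      forall_substZ_iff φ hk (fun a b => psiWord φ i a = psiWord φ i b) x y).trans forall_comm

/-- For a substitution `φ` of constant length `k`, biinfinite sequences `x, y`, and
`m ≥ 1`: `φ^m(x) = φ^m(y)` if and only if `Θ(x) = Θ(y)` for every map `Θ ∈ F_{φ,m}`,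
i.e. for every composition `Ψ_{i_{m-1}} ∘ ⋯ ∘ Ψ_{i_0}` applied coordinatewise. -/
theorem subst_pow_eq_iff_psi_eq {A : Type*} [Inhabited A] (φ : A → List A) (k : ℕ)
    (hk : 0 < k) (hlen : ∀ a, (φ a).length = k) (x y : ℤ → A) (m : ℕ) (hm : 1 ≤ m) :
    (substZ φ k)^[m] x = (substZ φ k)^[m] y ↔
      ∀ i : Fin m → Fin k, (fun n => psiWord φ i (x n)) = fun n => psiWord φ i (y n) :=
  subst_pow_eq_iff_psi_eq_general φ k hk x y m
end

section
/- Let φ be a growing substitution with biinfinite fixed point x (φ(x) = x), and suppose x is nonperiodic and the desubstitution sequence of a nonperiodic point z ∈ X_φ is eventually periodic with period m, i.e., R_φ^{k+m}(z) = R_φ^k(z) for some k ≥ 0. Then z is a quasi-fixed point of φ of period m. -/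
def blockStart {A : Type*} (φ : A → List A) (x : ℤ → A) (j : ℤ) : ℤ :=
  if 0 ≤ j then ∑ t ∈ Finset.range j.toNat, ((φ (x (t : ℤ))).length : ℤ)
  else - ∑ t ∈ Finset.range (-j).toNat, ((φ (x (-(t : ℤ) - 1))).length : ℤ)

open Classical in
noncomputable def substZgen {A : Type*} [Inhabited A] (φ : A → List A) (x : ℤ → A) :
    ℤ → A :=
  fun n =>
    if h : ∃ j : ℤ, blockStart φ x j ≤ n ∧ n < blockStart φ x (j + 1) then
      (φ (x h.choose)).getD (n - blockStart φ x h.choose).toNat default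
    else default

def memXphi {A : Type*} (φ : A → List A) (x : ℤ → A) : Prop :=
  ∀ (i : ℤ) (L : ℕ), ∃ (a : A) (n : ℕ),
    (List.ofFn (fun j : Fin L => x (i + j))) <:+: (substWord φ)^[n] [a]

def periodicZ {A : Type*} (x : ℤ → A) : Prop :=
  ∃ p : ℕ, 0 < p ∧ ∀ n : ℤ, x (n + p) = x n

namespace StrictMono

variable {f : ℤ → ℤ}

theorem monotone_sub_id (hf : StrictMono f) : Monotone fun j => f j - j :=
  monotone_int_of_le_succ fun j => by have := hf (lt_add_one j); omega

theorem exists_le_lt_apply_succ (hf : StrictMono f) (n : ℤ) :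
    ∃ j, f j ≤ n ∧ n < f (j + 1) := by
  have hg := hf.monotone_sub_id
  have bdd : ∃ b, ∀ j, f j ≤ n → j ≤ b := by
    refine ⟨max 0 (n - f 0), fun j hj => ?_⟩
    rcases le_total j 0 with h | h
    · omega
    · have := hg h; dsimp only at this; omega
  have nonempty : ∃ j, f j ≤ n := by
    refine ⟨min 0 (n - f 0), ?_⟩
    have := hg (min_le_left 0 (n - f 0)); dsimp only at this; omega
  obtain ⟨j, hj, hmax⟩ := Int.exists_greatest_of_bdd bdd nonempty
  exact ⟨j, hj, not_le.mp fun h => by have := hmax _ h; omega⟩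

theorem eq_of_le_lt_apply_succ (hf : StrictMono f) {n j j' : ℤ}
    (h : f j ≤ n ∧ n < f (j + 1)) (h' : f j' ≤ n ∧ n < f (j' + 1)) : j = j' := by
  by_contra hne
  rcases lt_or_gt_of_ne hne with hlt | hlt
  · have := hf.monotone (show j + 1 ≤ j' by omega); omega
  · have := hf.monotone (show j' + 1 ≤ j by omega); omega

end StrictMono

section Shift

variable {A : Type*}

@[simp]
theorem shiftZ_apply (c n : ℤ) (y : ℤ → A) : shiftZ c y n = y (n + c) := rfl

@[simp]
theorem shiftZ_zero (y : ℤ → A) : shiftZ 0 y = y := by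
  funext n; simp

theorem shiftZ_shiftZ (a b : ℤ) (y : ℤ → A) : shiftZ a (shiftZ b y) = shiftZ (a + b) y := by
  funext n; simp [add_assoc]

def ShiftEquiv (y y' : ℤ → A) : Prop := ∃ e : ℤ, shiftZ e y = y'

namespace ShiftEquiv

@[refl]
theorem refl (y : ℤ → A) : ShiftEquiv y y := ⟨0, shiftZ_zero y⟩

@[symm]
theorem symm {y y' : ℤ → A} : ShiftEquiv y y' → ShiftEquiv y' y
  | ⟨e, h⟩ => ⟨-e, by rw [← h, shiftZ_shiftZ, neg_add_cancel, shiftZ_zero]⟩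

@[trans]
theorem trans {y y' y'' : ℤ → A} : ShiftEquiv y y' → ShiftEquiv y' y'' → ShiftEquiv y y''
  | ⟨e, h⟩, ⟨e', h'⟩ => ⟨e' + e, by rw [← h', ← h, shiftZ_shiftZ]⟩

instance : @Trans (ℤ → A) (ℤ → A) (ℤ → A) ShiftEquiv ShiftEquiv ShiftEquiv := ⟨trans⟩

end ShiftEquiv

end Shift

section Substitution

variable {A : Type*} (φ : A → List A)

@[simp]
theorem blockStart_zero (y : ℤ → A) : blockStart φ y 0 = 0 := by
  simp [blockStart]

theorem blockStart_succ (y : ℤ → A) (j : ℤ) :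
    blockStart φ y (j + 1) = blockStart φ y j + (φ (y j)).length := by
  rcases le_or_gt 0 j with hj | hj
  · rw [blockStart, blockStart, if_pos (by omega), if_pos hj,
      show (j + 1).toNat = j.toNat + 1 by omega, Finset.sum_range_succ, Int.toNat_of_nonneg hj]
  · rcases eq_or_lt_of_le (show j + 1 ≤ 0 by omega) with h0 | h0
    · obtain rfl : j = -1 := by omega
      simp [blockStart]
    · rw [blockStart, blockStart, if_neg (by omega), if_neg (by omega),
        show (-j).toNat = (-(j + 1)).toNat + 1 by omega, Finset.sum_range_succ,
        show -(((-(j + 1)).toNat : ℤ)) - 1 = j by omega]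
      ring

theorem blockStart_strictMono (hne : ∀ a, φ a ≠ []) (y : ℤ → A) :
    StrictMono (blockStart φ y) :=
  strictMono_int_of_lt_succ fun j => by
    rw [blockStart_succ]
    have := List.length_pos_iff.mpr (hne (y j))
    omega

theorem blockStart_add (y : ℤ → A) (a b : ℤ) :
    blockStart φ y (a + b) = blockStart φ y a + blockStart φ (shiftZ a y) b := by
  induction b using Int.induction_on with
  | zero => simp
  | succ k ih =>
    rw [← add_assoc, blockStart_succ, ih, blockStart_succ, shiftZ_apply, add_comm (k : ℤ) a]
    ring
  | pred k ih =>
    have h := blockStart_succ φ y (a + (-(k : ℤ) - 1))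
    have h' := blockStart_succ φ (shiftZ a y) (-(k : ℤ) - 1)
    rw [show a + (-(k : ℤ) - 1) + 1 = a + -k by ring, ih] at h
    rw [show -(k : ℤ) - 1 + 1 = -k by ring, shiftZ_apply,
      show -(k : ℤ) - 1 + a = a + (-k - 1) by ring] at h'
    omega

variable [Inhabited A]

theorem substZgen_eq_getD (hne : ∀ a, φ a ≠ []) (y : ℤ → A) {j n : ℤ}
    (hj : blockStart φ y j ≤ n ∧ n < blockStart φ y (j + 1)) :
    substZgen φ y n = (φ (y j)).getD (n - blockStart φ y j).toNat default := by
  have hex : ∃ j, blockStart φ y j ≤ n ∧ n < blockStart φ y (j + 1) := ⟨j, hj⟩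
  rw [substZgen, dif_pos hex,
    (blockStart_strictMono φ hne y).eq_of_le_lt_apply_succ hex.choose_spec hj]

theorem substZgen_shiftZ (hne : ∀ a, φ a ≠ []) (y : ℤ → A) (a : ℤ) :
    substZgen φ (shiftZ a y) = shiftZ (blockStart φ y a) (substZgen φ y) := by
  have shifted : ∀ b, blockStart φ (shiftZ a y) b = blockStart φ y (a + b) - blockStart φ y a :=
    fun b => by rw [blockStart_add]; ring
  funext n
  obtain ⟨j, hj⟩ := (blockStart_strictMono φ hne (shiftZ a y)).exists_le_lt_apply_succ n
  rw [shifted, shifted] at hj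
  have hj' : blockStart φ y (a + j) ≤ n + blockStart φ y a ∧
      n + blockStart φ y a < blockStart φ y (a + j + 1) := by
    rw [add_assoc]; omega
  rw [shiftZ_apply, substZgen_eq_getD φ hne _ hj',
    substZgen_eq_getD φ hne _ (by rwa [shifted, shifted]), shifted, shiftZ_apply, add_comm j a]
  congr 2
  omega

variable {φ}

theorem ShiftEquiv.map_substZgen (hne : ∀ a, φ a ≠ []) {y y' : ℤ → A} (h : ShiftEquiv y y') :
    ShiftEquiv (substZgen φ y) (substZgen φ y') := by
  obtain ⟨e, rfl⟩ := h
  exact ⟨_, (substZgen_shiftZ φ hne y e).symm⟩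

theorem ShiftEquiv.map_iterate_substZgen (hne : ∀ a, φ a ≠ []) (k : ℕ) {y y' : ℤ → A}
    (h : ShiftEquiv y y') : ShiftEquiv ((substZgen φ)^[k] y) ((substZgen φ)^[k] y') := by
  induction k generalizing y y' with
  | zero => exact h
  | succ k ih => exact ih (h.map_substZgen hne)

theorem shiftEquiv_iterate_substZgen_of_chain (hne : ∀ a, φ a ≠ []) {zs : ℕ → ℤ → A}
    (hchain : ∀ i, ShiftEquiv (substZgen φ (zs (i + 1))) (zs i)) (i k : ℕ) :
    ShiftEquiv ((substZgen φ)^[k] (zs (i + k))) (zs i) := by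
  induction k with
  | zero => rfl
  | succ k ih =>
    rw [Function.iterate_succ_apply, ← add_assoc]
    exact ((hchain (i + k)).map_iterate_substZgen hne k).trans ih

end Substitution

theorem eventually_periodic_desubstitution_quasiFixed_general {A : Type*} [Inhabited A]
    (φ : A → List A) (hne : ∀ a, φ a ≠ [])
    (z : ℤ → A)
    (zs : ℕ → ℤ → A) (c : ℕ → ℕ) (h0 : zs 0 = z)
    (hrec : ∀ i, zs i = shiftZ (c i : ℤ) (substZgen φ (zs (i + 1))) ∧
      c i < (φ (zs (i + 1) 0)).length)
    (m K : ℕ) (hper : zs (K + m) = zs K) :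
    ∃ c' : ℤ, shiftZ c' ((substZgen φ)^[m] z) = z := by
  have chain := shiftEquiv_iterate_substZgen_of_chain hne
    fun i => ⟨c i, (hrec i).1.symm⟩
  have hz : ShiftEquiv ((substZgen φ)^[K] (zs K)) z := by simpa [h0] using chain 0 K
  have hK : ShiftEquiv ((substZgen φ)^[m] (zs K)) (zs K) := by simpa [hper] using chain K m
  calc ShiftEquiv ((substZgen φ)^[m] z) ((substZgen φ)^[m] ((substZgen φ)^[K] (zs K))) :=
        hz.symm.map_iterate_substZgen hne m
    _ = (substZgen φ)^[K] ((substZgen φ)^[m] (zs K)) :=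
        (Function.Commute.iterate_iterate_self _ m K).eq _
    ShiftEquiv _ z := (hK.map_iterate_substZgen hne K).trans hz

/-- Let `φ` be a growing substitution with a nonperiodic biinfinite fixed point `x`
(`φ(x) = x`), and let `z ∈ X_φ` be a nonperiodic point whose desubstitution sequence
`(z^i)` (with `z⁰ = z`, `z^i = T^{c_i}(φ(z^{i+1}))`, `0 ≤ c_i < |φ(z^{i+1}_0)|`) is
eventually periodic with period `m`, i.e. `z^{K+m} = z^K` for some `K ≥ 0`. Then `z` is a
quasi-fixed point of `φ` of period `m`: `T^c(φ^m(z)) = z` for some `c ∈ ℤ`. -/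
theorem eventually_periodic_desubstitution_quasiFixed {A : Type*} [Inhabited A]
    (φ : A → List A) (hne : ∀ a, φ a ≠ [])
    (hgrow : ∀ a : A, Filter.Tendsto (fun n => ((substWord φ)^[n] [a]).length)
      Filter.atTop Filter.atTop)
    (x : ℤ → A) (hx : substZgen φ x = x) (hxnp : ¬ periodicZ x)
    (z : ℤ → A) (hzX : memXphi φ z) (hznp : ¬ periodicZ z)
    (zs : ℕ → ℤ → A) (c : ℕ → ℕ) (h0 : zs 0 = z)
    (hzsX : ∀ i, memXphi φ (zs i)) (hzsnp : ∀ i, ¬ periodicZ (zs i))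
    (hrec : ∀ i, zs i = shiftZ (c i : ℤ) (substZgen φ (zs (i + 1))) ∧
      c i < (φ (zs (i + 1) 0)).length)
    (m K : ℕ) (hm : 1 ≤ m) (hper : zs (K + m) = zs K) :
    ∃ c' : ℤ, shiftZ c' ((substZgen φ)^[m] z) = z :=
  eventually_periodic_desubstitution_quasiFixed_general φ hne z zs c h0 hrec m K hper
end
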